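/- Let n ≥ 1 and let μ₀, μ₁ be probability measures on ℝⁿ with H(μ₀|dx) < ∞, H(μ₁|dx) < ∞ and finite second moments ∫|x|² dμ₀ < ∞, ∫|x|² dμ₁ < ∞. Then the entropic cost is finite: −∞ < 𝒜(μ₀,μ₁) < ∞. -/

import Mathlib

open MeasureTheory Filter Set
open scoped ENNReal NNReal

noncomputable section

abbrev Eucl (n : ℕ) : Type := EuclideanSpace ℝ (Fin n)

/-- Heat semigroup `T_t` on `ℝⁿ` (generator `Δ/2`), with `T_0 f = f`. -/
noncomputable def heat (n : ℕ) (t : ℝ) (f : Eucl n → ℝ) (x : Eucl n) : ℝ :=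
  if t = 0 then f x
  else ∫ y : Eucl n, f y * Real.exp (-‖x - y‖ ^ 2 / (2 * t)) / (2 * Real.pi * t) ^ ((n : ℝ) / 2)

/-- Relative entropy `H(ρ dx | dx) = ∫ ρ log ρ dx` of a density `ρ`. -/
noncomputable def entDens (n : ℕ) (ρ : Eucl n → ℝ) : ℝ :=
  ∫ x : Eucl n, ρ x * Real.log (ρ x)

/-- The measure `ρ dx`. -/
noncomputable def densMeas (n : ℕ) (ρ : Eucl n → ℝ) : Measure (Eucl n) :=
  (volume : Measure (Eucl n)).withDensity fun x => ENNReal.ofReal (ρ x)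

/-- The measure `R₀₁(dx dy) = e^{-|x-y|²/2} (2π)^{-n/2} dx dy` on `ℝⁿ × ℝⁿ`. -/
noncomputable def R01 (n : ℕ) : Measure (Eucl n × Eucl n) :=
  (volume : Measure (Eucl n × Eucl n)).withDensity fun p =>
    ENNReal.ofReal (Real.exp (-‖p.1 - p.2‖ ^ 2 / 2) / (2 * Real.pi) ^ ((n : ℝ) / 2))

open Classical in
/-- Relative entropy `H(p|r) = ∫ log (dp/dr) dp`, `+∞` if not absolutely continuous
(or not integrable; the paper's definition requires an integrability condition as well). -/
noncomputable def relEnt {X : Type} [MeasurableSpace X] (p r : Measure X) : EReal :=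
  if p ≪ r ∧ Integrable (fun x => Real.log (p.rnDeriv r x).toReal) p
  then ((∫ x, Real.log (p.rnDeriv r x).toReal ∂p : ℝ) : EReal) else ⊤

/-- `π` is a coupling of `μ0` and `μ1`. -/
def Coupling {X : Type} [MeasurableSpace X] (π : Measure (X × X)) (μ0 μ1 : Measure X) : Prop :=
  IsProbabilityMeasure π ∧ π.map Prod.fst = μ0 ∧ π.map Prod.snd = μ1

/-- Relative entropy of a measure with respect to Lebesgue, `∫ ρ log ρ` for the density `ρ`. -/
noncomputable def entLeb (n : ℕ) (μ : Measure (Eucl n)) : ℝ :=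
  ∫ x, (μ.rnDeriv volume x).toReal * Real.log ((μ.rnDeriv volume x).toReal)

/-- Entropic cost (EReal-valued):
`𝒜(μ0,μ1) = inf { H(π|R₀₁) } - (H(μ0|dx)+H(μ1|dx))/2`. -/
noncomputable def entCostE (n : ℕ) (μ0 μ1 : Measure (Eucl n)) : EReal :=
  (⨅ π : {π : Measure (Eucl n × Eucl n) // Coupling π μ0 μ1}, relEnt (π.1) (R01 n))
    - (((entLeb n μ0 + entLeb n μ1) / 2 : ℝ) : EReal)

/-- Entropic cost, real-valued. -/
noncomputable def entCost (n : ℕ) (μ0 μ1 : Measure (Eucl n)) : ℝ :=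
  (entCostE n μ0 μ1).toReal

/-- Squared quadratic Wasserstein distance. -/
noncomputable def W2sq (n : ℕ) (μ0 μ1 : Measure (Eucl n)) : ℝ :=
  (⨅ π : {π : Measure (Eucl n × Eucl n) // Coupling π μ0 μ1},
      ∫⁻ p, (‖p.1 - p.2‖₊ : ℝ≥0∞) ^ 2 ∂(π.1)).toReal

/-- `f` is (the function of) a Schwartz function. -/
def IsSchwartz (n : ℕ) (f : Eucl n → ℝ) : Prop :=
  ∃ F : SchwartzMap (Eucl n) ℝ, ⇑F = f

/-- The pair `(μ0, μ1)` belongs to `Π_𝒮`: it admits a Schrödinger decomposition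
`μ0 = f·T₁g dx`, `μ1 = g·T₁f dx` with `f, g` positive Schwartz functions bounded below
by a Gaussian. -/
def PiS (n : ℕ) (μ0 μ1 : Measure (Eucl n)) : Prop :=
  ∃ f g : Eucl n → ℝ, IsSchwartz n f ∧ IsSchwartz n g ∧
    (∀ x, 0 < f x) ∧ (∀ x, 0 < g x) ∧
    (∃ α c : ℝ, 0 < α ∧ 0 < c ∧ (∀ x, c * Real.exp (-α * ‖x‖ ^ 2) ≤ f x) ∧
      (∀ x, c * Real.exp (-α * ‖x‖ ^ 2) ≤ g x)) ∧
    μ0 = densMeas n (fun x => f x * heat n 1 g x) ∧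
    μ1 = densMeas n (fun x => g x * heat n 1 f x)

/-- Laplacian `Δφ = ∑ᵢ ∂²φ/∂xᵢ²`. -/
noncomputable def lap (n : ℕ) (φ : Eucl n → ℝ) (x : Eucl n) : ℝ :=
  ∑ i, fderiv ℝ (fun y => fderiv ℝ φ y (EuclideanSpace.single i 1)) x (EuclideanSpace.single i 1)

/-- Squared Hilbert-Schmidt norm of the Hessian, `‖Hess φ‖² = ∑ᵢⱼ (∂ᵢ∂ⱼφ)²`. -/
noncomputable def hessHS (n : ℕ) (φ : Eucl n → ℝ) (x : Eucl n) : ℝ :=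
  ∑ i, ∑ j, (fderiv ℝ (fun y => fderiv ℝ φ y (EuclideanSpace.single j 1)) x
    (EuclideanSpace.single i 1)) ^ 2

/-- Divergence `∇·F = ∑ᵢ ∂Fᵢ/∂xᵢ` of a vector field. -/
noncomputable def diverg (n : ℕ) (F : Eucl n → Eucl n) (x : Eucl n) : ℝ :=
  ∑ i, fderiv ℝ (fun y => F y i) x (EuclideanSpace.single i 1)

/-- Heat semigroup acting componentwise on vector-valued functions. -/
noncomputable def heatV (n : ℕ) (t : ℝ) (F : Eucl n → Eucl n) (x : Eucl n) : Eucl n :=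
  (EuclideanSpace.equiv (Fin n) ℝ).symm (fun i => heat n t (fun y => F y i) x)

/-- Entropic interpolation density `μ_s = T_s f · T_{1-s} g`. -/
noncomputable def entInterp (n : ℕ) (f g : Eucl n → ℝ) (s : ℝ) (x : Eucl n) : ℝ :=
  heat n s f x * heat n (1 - s) g x

/-- The potential `θ_s = (log T_{1-s} g - log T_s f)/2`, whose gradient drives the
transport equation of the entropic interpolation. -/
noncomputable def thetaPot (n : ℕ) (f g : Eucl n → ℝ) (s : ℝ) (x : Eucl n) : ℝ :=
  (Real.log (heat n (1 - s) g x) - Real.log (heat n s f x)) / 2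

end

/-!
The infimum over couplings is bounded above by the value at the product coupling
`μ₀ ⊗ μ₁`, whose log-density with respect to `R₀₁` is
`log ρ₀(x) + log ρ₁(y) + |x - y|² / 2 + (n / 2) log (2π)`; this is integrable by the entropy and
second moment assumptions. It is bounded below, uniformly in the coupling `π`, by the
Donsker–Varadhan inequality `H(π | R) ≥ ∫ f dπ - log ∫ e^f dR` (Gibbs' inequality against the
tilted probability measure `e^f R / ∫ e^f dR`) with `f(x, y) = -(|x|² + |y|²)`: the integral
`∫ f dπ` only depends on the second moments of the marginals, and `e^f` is `R₀₁`-integrable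
because `R₀₁` is dominated by a multiple of Lebesgue measure.
-/
open Real InformationTheory

section LogLikelihoodRatio

variable {α β : Type*} {mα : MeasurableSpace α} {mβ : MeasurableSpace β}

theorem integral_sub_log_integral_exp_le_integral_llr {μ ν : Measure α}
    [IsProbabilityMeasure μ] [SigmaFinite ν] {f : α → ℝ} (hμν : μ ≪ ν)
    (h_int : Integrable (llr μ ν) μ) (hfμ : Integrable f μ)
    (hfν : Integrable (fun x ↦ exp (f x)) ν) :
    ∫ x, f x ∂μ - log (∫ x, exp (f x) ∂ν) ≤ ∫ x, llr μ ν x ∂μ := by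
  have : NeZero ν := ⟨fun h ↦ IsProbabilityMeasure.ne_zero μ (by simpa [h] using hμν)⟩
  have := isProbabilityMeasure_tilted hfν
  have hμ_tilted : μ ≪ ν.tilted f := hμν.trans (absolutelyContinuous_tilted hfν)
  have gibbs := integral_llr_add_sub_measure_univ_nonneg hμ_tilted
    (integrable_llr_tilted_right hμν hfμ h_int hfν)
  rw [integral_llr_tilted_right hμν hfμ hfν h_int] at gibbs
  simp only [probReal_univ] at gibbs
  linarith

theorem llr_withDensity_ofReal_right {μ ν : Measure α} [SigmaFinite μ] [SigmaFinite ν]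
    (hμν : μ ≪ ν) {g : α → ℝ} (hg : Measurable g) (hg_pos : ∀ x, 0 < g x) :
    llr μ (ν.withDensity fun x ↦ ENNReal.ofReal (g x)) =ᵐ[μ]
      fun x ↦ llr μ ν x - log (g x) := by
  have hrn := Measure.rnDeriv_withDensity_right μ ν hg.ennreal_ofReal.aemeasurable
    (ae_of_all _ fun x ↦ (ENNReal.ofReal_pos.mpr (hg_pos x)).ne')
    (ae_of_all _ fun _ ↦ ENNReal.ofReal_ne_top)
  filter_upwards [hμν.ae_eq hrn, Measure.rnDeriv_pos hμν,
    hμν.ae_le (Measure.rnDeriv_lt_top μ ν)] with x hx h_pos h_lt_top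
  rw [llr, hx, ENNReal.toReal_mul, ENNReal.toReal_inv, ENNReal.toReal_ofReal (hg_pos x).le,
    log_mul (inv_ne_zero (hg_pos x).ne') (ENNReal.toReal_pos h_pos.ne' h_lt_top.ne).ne',
    log_inv, llr]
  ring

theorem MeasureTheory.Measure.prod_eq_withDensity_rnDeriv {μ μ' : Measure α} {ν ν' : Measure β}
    [SigmaFinite μ] [SigmaFinite μ'] [SigmaFinite ν] [SigmaFinite ν']
    (hμ : μ ≪ μ') (hν : ν ≪ ν') :
    μ.prod ν = (μ'.prod ν').withDensity fun p ↦ μ.rnDeriv μ' p.1 * ν.rnDeriv ν' p.2 := by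
  refine Measure.prod_eq fun s t hs ht ↦ ?_
  rw [withDensity_apply _ (hs.prod ht), ← Measure.prod_restrict,
    lintegral_prod_mul (Measure.measurable_rnDeriv μ μ').aemeasurable
      (Measure.measurable_rnDeriv ν ν').aemeasurable,
    Measure.setLIntegral_rnDeriv hμ s, Measure.setLIntegral_rnDeriv hν t]

theorem llr_prod {μ μ' : Measure α} {ν ν' : Measure β}
    [SigmaFinite μ] [SigmaFinite μ'] [SigmaFinite ν] [SigmaFinite ν']
    (hμ : μ ≪ μ') (hν : ν ≪ ν') :
    llr (μ.prod ν) (μ'.prod ν') =ᵐ[μ.prod ν] fun p ↦ llr μ μ' p.1 + llr ν ν' p.2 := by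
  have hrn : (μ.prod ν).rnDeriv (μ'.prod ν') =ᵐ[μ'.prod ν']
      fun p ↦ μ.rnDeriv μ' p.1 * ν.rnDeriv ν' p.2 := by
    conv_lhs => rw [Measure.prod_eq_withDensity_rnDeriv hμ hν]
    exact Measure.rnDeriv_withDensity _
      (((Measure.measurable_rnDeriv μ μ').comp measurable_fst).mul
        ((Measure.measurable_rnDeriv ν ν').comp measurable_snd))
  have hfst := Measure.quasiMeasurePreserving_fst (μ := μ) (ν := ν)
  have hsnd := Measure.quasiMeasurePreserving_snd (μ := μ) (ν := ν)
  filter_upwards [(hμ.prod hν).ae_eq hrn, hfst.ae (Measure.rnDeriv_pos hμ),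
    hfst.ae (hμ.ae_le (Measure.rnDeriv_lt_top μ μ')), hsnd.ae (Measure.rnDeriv_pos hν),
    hsnd.ae (hν.ae_le (Measure.rnDeriv_lt_top ν ν'))] with p hp hμ_pos hμ_lt hν_pos hν_lt
  rw [llr, hp, ENNReal.toReal_mul, log_mul (ENNReal.toReal_pos hμ_pos.ne' hμ_lt.ne).ne'
    (ENNReal.toReal_pos hν_pos.ne' hν_lt.ne).ne', llr, llr]

theorem integrable_fst_add_snd {γ : Measure (α × β)} {μ : Measure α} {ν : Measure β}
    (hγμ : γ.map Prod.fst = μ) (hγν : γ.map Prod.snd = ν) {f : α → ℝ} {g : β → ℝ}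
    (hf : Integrable f μ) (hg : Integrable g ν) :
    Integrable (fun p ↦ f p.1 + g p.2) γ :=
  ((hγμ ▸ hf).comp_measurable measurable_fst).add ((hγν ▸ hg).comp_measurable measurable_snd)

theorem integral_fst_add_snd {γ : Measure (α × β)} {μ : Measure α} {ν : Measure β}
    (hγμ : γ.map Prod.fst = μ) (hγν : γ.map Prod.snd = ν) {f : α → ℝ} {g : β → ℝ}
    (hf : Integrable f μ) (hg : Integrable g ν) :
    ∫ p, f p.1 + g p.2 ∂γ = ∫ x, f x ∂μ + ∫ y, g y ∂ν := by
  subst hγμ hγν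
  have hf' : Integrable (fun p : α × β ↦ f p.1) γ := hf.comp_measurable measurable_fst
  have hg' : Integrable (fun p : α × β ↦ g p.2) γ := hg.comp_measurable measurable_snd
  rw [integral_add hf' hg',
    integral_map measurable_fst.aemeasurable hf.1, integral_map measurable_snd.aemeasurable hg.1]

end LogLikelihoodRatio

section RelativeEntropy

variable {X : Type} [MeasurableSpace X] {p r : Measure X}

theorem relEnt_lt_top (hpr : p ≪ r) (h_int : Integrable (llr p r) p) : relEnt p r < ⊤ := by
  rw [relEnt, if_pos ⟨hpr, h_int⟩]
  exact EReal.coe_lt_top _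

theorem le_relEnt [IsProbabilityMeasure p] [SigmaFinite r] {f : X → ℝ} (hfp : Integrable f p)
    (hfr : Integrable (fun x ↦ exp (f x)) r) :
    ((∫ x, f x ∂p - log (∫ x, exp (f x) ∂r) : ℝ) : EReal) ≤ relEnt p r := by
  unfold relEnt
  split_ifs with h
  · exact EReal.coe_le_coe_iff.mpr
      (integral_sub_log_integral_exp_le_integral_llr h.1 h.2 hfp hfr)
  · exact le_top

end RelativeEntropy

section Coupling

variable {X : Type} [MeasurableSpace X]

theorem coupling_prod (μ0 μ1 : Measure X) [IsProbabilityMeasure μ0] [IsProbabilityMeasure μ1] :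
    Coupling (μ0.prod μ1) μ0 μ1 :=
  ⟨inferInstance, by simp, by simp⟩

end Coupling

section NormedSpace

theorem integrable_exp_neg_sq_norm {V : Type*} [NormedAddCommGroup V] [InnerProductSpace ℝ V]
    [FiniteDimensional ℝ V] [MeasurableSpace V] [BorelSpace V] :
    Integrable (fun x : V ↦ exp (-‖x‖ ^ 2)) := by
  refine Integrable.of_integral_ne_zero ?_
  have := GaussianFourier.integral_rexp_neg_mul_sq_norm (V := V) one_pos
  simp only [neg_one_mul] at this
  rw [this]
  positivity

theorem integrable_norm_sub_sq {E : Type*} [NormedAddCommGroup E] [MeasurableSpace E]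
    [BorelSpace E] [SecondCountableTopology E] {γ : Measure (E × E)}
    (h : Integrable (fun p : E × E ↦ ‖p.1‖ ^ 2 + ‖p.2‖ ^ 2) γ) :
    Integrable (fun p : E × E ↦ ‖p.1 - p.2‖ ^ 2) γ := by
  refine (h.const_mul 2).mono' (by fun_prop) (ae_of_all _ fun p ↦ ?_)
  rw [Real.norm_eq_abs, abs_of_nonneg (sq_nonneg _)]
  calc ‖p.1 - p.2‖ ^ 2 ≤ (‖p.1‖ + ‖p.2‖) ^ 2 := by gcongr; exact norm_sub_le _ _
    _ ≤ 2 * (‖p.1‖ ^ 2 + ‖p.2‖ ^ 2) := add_sq_le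

end NormedSpace

section EuclideanSpace

variable {n : ℕ}

noncomputable def r01Density (n : ℕ) (p : Eucl n × Eucl n) : ℝ :=
  exp (-‖p.1 - p.2‖ ^ 2 / 2) / (2 * π) ^ ((n : ℝ) / 2)

theorem R01_eq_withDensity :
    R01 n = volume.withDensity fun p ↦ ENNReal.ofReal (r01Density n p) := rfl

instance : SigmaFinite (R01 n) := SigmaFinite.withDensity_ofReal _

theorem r01Density_pos (p : Eucl n × Eucl n) : 0 < r01Density n p := by
  unfold r01Density; positivity

theorem measurable_r01Density : Measurable (r01Density n) := by
  unfold r01Density; fun_prop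

theorem log_r01Density (p : Eucl n × Eucl n) :
    log (r01Density n p) = -‖p.1 - p.2‖ ^ 2 / 2 - (n / 2) * log (2 * π) := by
  rw [r01Density, log_div (exp_ne_zero _) (by positivity), log_exp, log_rpow (by positivity)]

theorem r01Density_le (p : Eucl n × Eucl n) :
    r01Density n p ≤ ((2 * π) ^ ((n : ℝ) / 2))⁻¹ := by
  rw [r01Density, div_eq_mul_inv]
  refine mul_le_of_le_one_left (by positivity) (exp_le_one_iff.mpr ?_)
  have := sq_nonneg ‖p.1 - p.2‖
  linarith

theorem volume_ac_R01 : (volume : Measure (Eucl n × Eucl n)) ≪ R01 n :=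
  withDensity_absolutelyContinuous' measurable_r01Density.ennreal_ofReal.aemeasurable
    (ae_of_all _ fun p ↦ (ENNReal.ofReal_pos.mpr (r01Density_pos p)).ne')

theorem R01_le_smul_volume :
    R01 n ≤ ENNReal.ofReal ((2 * π) ^ ((n : ℝ) / 2))⁻¹ • volume := by
  rw [R01_eq_withDensity, ← withDensity_const]
  exact withDensity_mono (ae_of_all _ fun p ↦ ENNReal.ofReal_le_ofReal (r01Density_le p))

theorem integrable_exp_neg_sq_norm_R01 :
    Integrable (fun p : Eucl n × Eucl n ↦ exp (-(‖p.1‖ ^ 2 + ‖p.2‖ ^ 2))) (R01 n) := by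
  have hprod : Integrable (fun p : Eucl n × Eucl n ↦ exp (-‖p.1‖ ^ 2) * exp (-‖p.2‖ ^ 2)) :=
    integrable_exp_neg_sq_norm.mul_prod integrable_exp_neg_sq_norm
  refine ((hprod.smul_measure ENNReal.ofReal_ne_top).mono_measure R01_le_smul_volume).congr
    (ae_of_all _ fun p ↦ ?_)
  simp only [← exp_add, neg_add]

theorem llr_R01 (γ : Measure (Eucl n × Eucl n)) [SigmaFinite γ] (hγ : γ ≪ volume) :
    llr γ (R01 n) =ᵐ[γ] fun p ↦ llr γ volume p + (‖p.1 - p.2‖ ^ 2 / 2 + n / 2 * log (2 * π)) := by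
  filter_upwards [llr_withDensity_ofReal_right hγ measurable_r01Density r01Density_pos]
    with p hp
  rw [R01_eq_withDensity, hp, log_r01Density]
  ring

theorem relEnt_prod_R01_lt_top {μ0 μ1 : Measure (Eucl n)} [IsProbabilityMeasure μ0]
    [IsProbabilityMeasure μ1] (h0ac : μ0 ≪ volume) (h1ac : μ1 ≪ volume)
    (h0ent : Integrable (llr μ0 volume) μ0) (h1ent : Integrable (llr μ1 volume) μ1)
    (h0m : Integrable (fun x ↦ ‖x‖ ^ 2) μ0) (h1m : Integrable (fun x ↦ ‖x‖ ^ 2) μ1) :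
    relEnt (μ0.prod μ1) (R01 n) < ⊤ := by
  obtain ⟨-, hfst, hsnd⟩ := coupling_prod μ0 μ1
  have hac : μ0.prod μ1 ≪ volume := h0ac.prod h1ac
  have hllr : Integrable (fun p ↦ llr μ0 volume p.1 + llr μ1 volume p.2) (μ0.prod μ1) :=
    integrable_fst_add_snd hfst hsnd h0ent h1ent
  have hcost := integrable_norm_sub_sq (integrable_fst_add_snd hfst hsnd h0m h1m)
  refine relEnt_lt_top (hac.trans volume_ac_R01) ?_
  rw [integrable_congr (llr_R01 _ hac)]
  refine Integrable.add ?_ ((hcost.div_const 2).add (integrable_const _))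
  exact hllr.congr (llr_prod h0ac h1ac).symm

theorem le_relEnt_of_coupling {μ0 μ1 : Measure (Eucl n)} {γ : Measure (Eucl n × Eucl n)}
    (hγ : Coupling γ μ0 μ1)
    (h0m : Integrable (fun x ↦ ‖x‖ ^ 2) μ0) (h1m : Integrable (fun x ↦ ‖x‖ ^ 2) μ1) :
    ((-(∫ x, ‖x‖ ^ 2 ∂μ0 + ∫ x, ‖x‖ ^ 2 ∂μ1)
        - log (∫ p, exp (-(‖p.1‖ ^ 2 + ‖p.2‖ ^ 2)) ∂(R01 n)) : ℝ) : EReal) ≤ relEnt γ (R01 n) := by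
  obtain ⟨hγ_prob, hfst, hsnd⟩ := hγ
  have hmoment := integrable_fst_add_snd hfst hsnd h0m h1m
  calc _ = ((∫ p, -(‖p.1‖ ^ 2 + ‖p.2‖ ^ 2) ∂γ
          - log (∫ p, exp (-(‖p.1‖ ^ 2 + ‖p.2‖ ^ 2)) ∂(R01 n)) : ℝ) : EReal) := by
        rw [integral_neg, integral_fst_add_snd hfst hsnd h0m h1m]
    _ ≤ relEnt γ (R01 n) := le_relEnt hmoment.neg integrable_exp_neg_sq_norm_R01

end EuclideanSpace

theorem entropic_cost_finite_general (n : ℕ) (μ0 μ1 : Measure (Eucl n))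
    (h0 : IsProbabilityMeasure μ0) (h1 : IsProbabilityMeasure μ1)
    (h0ac : μ0 ≪ (volume : Measure (Eucl n))) (h1ac : μ1 ≪ (volume : Measure (Eucl n)))
    (h0ent : Integrable (fun x =>
      (μ0.rnDeriv volume x).toReal * Real.log ((μ0.rnDeriv volume x).toReal))
      (volume : Measure (Eucl n)))
    (h1ent : Integrable (fun x =>
      (μ1.rnDeriv volume x).toReal * Real.log ((μ1.rnDeriv volume x).toReal))
      (volume : Measure (Eucl n)))
    (h0m : Integrable (fun x => ‖x‖ ^ 2) μ0) (h1m : Integrable (fun x => ‖x‖ ^ 2) μ1) :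
    ⊥ < entCostE n μ0 μ1 ∧ entCostE n μ0 μ1 < ⊤ := by
  set I := ⨅ γ : {γ : Measure (Eucl n × Eucl n) // Coupling γ μ0 μ1}, relEnt γ.1 (R01 n)
  have hI_top : I < ⊤ := (iInf_le _ ⟨μ0.prod μ1, coupling_prod μ0 μ1⟩).trans_lt <|
    relEnt_prod_R01_lt_top h0ac h1ac ((integrable_rnDeriv_mul_log_iff h0ac).mp h0ent)
      ((integrable_rnDeriv_mul_log_iff h1ac).mp h1ent) h0m h1m
  have hI_bot : ⊥ < I :=
    (EReal.bot_lt_coe _).trans_le (le_iInf fun γ ↦ le_relEnt_of_coupling γ.2 h0m h1m)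
  rw [entCostE, sub_eq_add_neg, ← EReal.coe_neg]
  exact ⟨EReal.bot_lt_add_iff.mpr ⟨hI_bot, EReal.bot_lt_coe _⟩,
    EReal.add_lt_top hI_top.ne (EReal.coe_ne_top _)⟩

/-- Finiteness of the entropic cost for marginals with finite entropy and finite second
moment. -/
theorem entropic_cost_finite (n : ℕ) (hn : 1 ≤ n) (μ0 μ1 : Measure (Eucl n))
    (h0 : IsProbabilityMeasure μ0) (h1 : IsProbabilityMeasure μ1)
    (h0ac : μ0 ≪ (volume : Measure (Eucl n))) (h1ac : μ1 ≪ (volume : Measure (Eucl n)))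
    (h0ent : Integrable (fun x =>
      (μ0.rnDeriv volume x).toReal * Real.log ((μ0.rnDeriv volume x).toReal))
      (volume : Measure (Eucl n)))
    (h1ent : Integrable (fun x =>
      (μ1.rnDeriv volume x).toReal * Real.log ((μ1.rnDeriv volume x).toReal))
      (volume : Measure (Eucl n)))
    (h0m : Integrable (fun x => ‖x‖ ^ 2) μ0) (h1m : Integrable (fun x => ‖x‖ ^ 2) μ1) :
    ⊥ < entCostE n μ0 μ1 ∧ entCostE n μ0 μ1 < ⊤ :=
  entropic_cost_finite_general n μ0 μ1 h0 h1 h0ac h1ac h0ent h1ent h0m h1m
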